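/- arXiv:2404.16131 — 3 statements merged into one kernel-verified Lean document; each statement's English description precedes it below -/
import Mathlib

section
/- Let W be an edge-disjoint set of open wedges of G and let E_W be the set of edges contained in some wedge of W. Let C be a clique partition of G, let m_W be the number of edges of E_W crossing C and let m_S be the number of edges of E ∖ E_W crossing C. If m_S ≤ 2·(|E_W| − m_W), then the cost of C satisfies m_W + m_S ≤ 3·|W| ≤ 3·OPT_CD(G). -/
open scoped Classical

namespace CD

variable {V : Type*}

/-- An open wedge, encoded as a pair `(p, k)` where `p = s(i,j)` is the unordered pair of
endpoint vertices and `k` is the center: `{i,k}` and `{j,k}` are edges and `{i,j}` is not.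
Using an unordered pair identifies the wedges `(i,j,k)` and `(j,i,k)`. -/
def IsOpenWedge (G : SimpleGraph V) (w : Sym2 V × V) : Prop :=
  ∃ i j : V, w.1 = s(i, j) ∧ i ≠ j ∧ G.Adj i w.2 ∧ G.Adj j w.2 ∧ ¬ G.Adj i j

/-- The two edges of a wedge `(s(i,j), k)`, namely `s(i,k)` and `s(j,k)`. -/
def wedgeEdges (w : Sym2 V × V) : Set (Sym2 V) :=
  {e | ∃ x ∈ w.1, e = s(x, w.2)}

/-- The set of open wedges of `G`. -/
def wedgeSet (G : SimpleGraph V) : Set (Sym2 V × V) := {w | IsOpenWedge G w}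

/-- `E_W ⊆ E` is an STC labeling if every open wedge has one of its two edges in `E_W`. -/
def IsSTCLabeling (G : SimpleGraph V) (EW : Set (Sym2 V)) : Prop :=
  EW ⊆ G.edgeSet ∧
  ∀ i j k : V, i ≠ j → G.Adj i k → G.Adj j k → ¬ G.Adj i j →
    s(i, k) ∈ EW ∨ s(j, k) ∈ EW

/-- Minimum size of an STC labeling of `G`. -/
noncomputable def MinSTC (G : SimpleGraph V) : ℕ :=
  sInf {c | ∃ EW : Set (Sym2 V), IsSTCLabeling G EW ∧ EW.ncard = c}

variable [Fintype V] [DecidableEq V]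

/-- A clique partition: a partition of the vertex set all of whose parts are cliques in `G`. -/
def IsCliquePartition (G : SimpleGraph V) (C : Finpartition (Finset.univ : Finset V)) : Prop :=
  ∀ P ∈ C.parts, G.IsClique (P : Set V)

/-- An edge crosses the partition iff no part contains both of its endpoints
(equivalently, its endpoints lie in different parts). -/
def Crosses (C : Finpartition (Finset.univ : Finset V)) (e : Sym2 V) : Prop :=
  ¬ ∃ P ∈ C.parts, ∀ x ∈ e, x ∈ P

/-- The cost of a partition: the number of edges of `G` crossing it. -/
noncomputable def cost (G : SimpleGraph V) (C : Finpartition (Finset.univ : Finset V)) : ℕ :=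
  {e | e ∈ G.edgeSet ∧ Crosses C e}.ncard

/-- Optimal cluster deletion value: the minimum cost of a clique partition of `G`. -/
noncomputable def OPTCD (G : SimpleGraph V) : ℕ :=
  sInf {c | ∃ C : Finpartition (Finset.univ : Finset V), IsCliquePartition G C ∧ cost G C = c}

/-- `B_k(G)`: edges `{i,j} ∈ E` with `i, j ≠ k`, `{i,k} ∈ E` and `{j,k} ∉ E`. -/
def Bset (G : SimpleGraph V) (k : V) : Set (Sym2 V) :=
  {e | ∃ i j : V, e = s(i, j) ∧ G.Adj i j ∧ j ≠ k ∧ G.Adj i k ∧ ¬ G.Adj j k}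

/-- `N_k(G)`: unordered pairs `{i,j}` of distinct vertices with `{i,k}, {j,k} ∈ E`
and `{i,j} ∉ E`. -/
def Nset (G : SimpleGraph V) (k : V) : Set (Sym2 V) :=
  {e | ∃ i j : V, e = s(i, j) ∧ i ≠ j ∧ ¬ G.Adj i j ∧ G.Adj i k ∧ G.Adj j k}

/-- Feasibility for the STC LP relaxation: variables are nonnegative on edges and for every
open wedge `(i,j,k)` centered at `k` we have `x_{ik} + x_{jk} ≥ 1`. -/
def LPFeasible (G : SimpleGraph V) (x : Sym2 V → ℚ) : Prop :=
  (∀ e ∈ G.edgeSet, 0 ≤ x e) ∧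
  ∀ i j k : V, i ≠ j → G.Adj i k → G.Adj j k → ¬ G.Adj i j →
    1 ≤ x s(i, k) + x s(j, k)

/-- A solution is half-integral if every edge variable lies in `{0, 1/2, 1}`. -/
def HalfIntegral (G : SimpleGraph V) (x : Sym2 V → ℚ) : Prop :=
  ∀ e ∈ G.edgeSet, x e = 0 ∨ x e = 1 / 2 ∨ x e = 1

/-- Feasibility for the program (IP2): binary variables `y_e, z_e` on edges, and for every
open wedge `(i,j,k)` centered at `k`, `z_{ik} ≤ y_{jk}` and `z_{jk} ≤ y_{ik}`. -/
def IP2Feasible (G : SimpleGraph V) (y z : Sym2 V → ℚ) : Prop :=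
  (∀ e ∈ G.edgeSet, (y e = 0 ∨ y e = 1) ∧ (z e = 0 ∨ z e = 1)) ∧
  ∀ i j k : V, i ≠ j → G.Adj i k → G.Adj j k → ¬ G.Adj i j →
    z s(i, k) ≤ y s(j, k) ∧ z s(j, k) ≤ y s(i, k)


/-!
Every open wedge has an edge crossing any clique partition: otherwise both endpoints lie in the
part of the center, which is a clique, although they are not adjacent. As the wedges of `W` are
edge-disjoint, these crossing edges are distinct, so `|W| ≤ m_W` and `|W| ≤ cost C` for every
clique partition, whence `|W| ≤ OPT_CD`. Since `|E_W| ≤ 2|W|`, the hypothesis gives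
`m_W + m_S ≤ 2|E_W| - m_W ≤ 4|W| - |W|`.
-/

theorem _root_.Set.Finite.ncard_biUnion_le_mul {ι α : Type*} {t : Set ι} (ht : t.Finite)
    {s : ι → Set α} {n : ℕ} (h : ∀ i ∈ t, (s i).ncard ≤ n) :
    (⋃ i ∈ t, s i).ncard ≤ t.ncard * n := by
  calc (⋃ i ∈ t, s i).ncard = (⋃ i ∈ ht.toFinset, s i).ncard := by simp
    _ ≤ ∑ i ∈ ht.toFinset, (s i).ncard := Finset.set_ncard_biUnion_le _ _
    _ ≤ ∑ _ ∈ ht.toFinset, n := Finset.sum_le_sum fun i hi => h i (ht.mem_toFinset.1 hi)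
    _ = t.ncard * n := by simp [Set.ncard_eq_toFinset_card t ht]

theorem _root_.Set.ncard_le_ncard_biUnion_inter {ι α : Type*} {t : Set ι} {s : ι → Set α}
    {u : Set α} (hd : t.PairwiseDisjoint s) (hu : ∀ i ∈ t, (s i ∩ u).Nonempty)
    (hfin : ((⋃ i ∈ t, s i) ∩ u).Finite) :
    t.ncard ≤ ((⋃ i ∈ t, s i) ∩ u).ncard := by
  obtain hα | hα := isEmpty_or_nonempty α
  · simp [Set.eq_empty_of_forall_notMem fun i hi =>
      (hu i hi).ne_empty (Set.eq_empty_of_isEmpty _)]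
  choose! f hf using hu
  refine Set.ncard_le_ncard_of_injOn f
    (fun i hi => ⟨Set.mem_biUnion hi (hf i hi).1, (hf i hi).2⟩) (fun i hi j hj hij => ?_) hfin
  by_contra hne
  exact (hd hi hj hne).ne_of_mem (hf i hi).1 (hf j hj).1 hij

theorem wedgeEdges_ncard_le_two {α : Type*} (w : Sym2 α × α) : (wedgeEdges w).ncard ≤ 2 := by
  obtain ⟨p, k⟩ := w
  induction p using Sym2.ind with
  | h a b =>
    have hsub : wedgeEdges (s(a, b), k) ⊆ {s(a, k), s(b, k)} := by
      rintro e ⟨x, hx, rfl⟩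
      rcases Sym2.mem_iff.1 hx with rfl | rfl <;> simp
    exact (Set.ncard_le_ncard hsub).trans ((Set.ncard_insert_le _ _).trans (by simp))

theorem IsOpenWedge.wedgeEdges_subset_edgeSet {α : Type*} {G : SimpleGraph α} {w : Sym2 α × α}
    (hw : IsOpenWedge G w) : wedgeEdges w ⊆ G.edgeSet := by
  obtain ⟨i, j, hij, -, hi, hj, -⟩ := hw
  rintro e ⟨x, hx, rfl⟩
  rcases Sym2.mem_iff.1 (hij ▸ hx) with rfl | rfl
  exacts [hi, hj]

variable {G : SimpleGraph V} {C : Finpartition (Finset.univ : Finset V)}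

theorem IsOpenWedge.exists_crosses (hC : IsCliquePartition G C) {w : Sym2 V × V}
    (hw : IsOpenWedge G w) : (wedgeEdges w ∩ {e | Crosses C e}).Nonempty := by
  obtain ⟨i, j, hij, hne, -, -, hnadj⟩ := hw
  have hi : s(i, w.2) ∈ wedgeEdges w := ⟨i, by simp [hij], rfl⟩
  have hj : s(j, w.2) ∈ wedgeEdges w := ⟨j, by simp [hij], rfl⟩
  by_contra hnone
  rw [Set.not_nonempty_iff_eq_empty, Set.eq_empty_iff_forall_notMem] at hnone
  obtain ⟨P, hP, hiP⟩ := not_not.1 fun h => hnone _ ⟨hi, h⟩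
  obtain ⟨Q, hQ, hjQ⟩ := not_not.1 fun h => hnone _ ⟨hj, h⟩
  have hPQ : P = Q := C.eq_of_mem_parts hP hQ (hiP w.2 (by simp)) (hjQ w.2 (by simp))
  exact hnadj (hC P hP (hiP i (by simp)) (hPQ ▸ hjQ j (by simp)) hne)

theorem isCliquePartition_bot (G : SimpleGraph V) : IsCliquePartition G ⊥ := by
  intro P hP
  obtain ⟨a, -, rfl⟩ := Finpartition.mem_bot_iff.1 hP
  simp

variable {W : Set (Sym2 V × V)}

theorem ncard_le_ncard_wedgeEdges_crosses (hW : ∀ w ∈ W, IsOpenWedge G w)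
    (hdisj : W.Pairwise fun w₁ w₂ => Disjoint (wedgeEdges w₁) (wedgeEdges w₂))
    (hC : IsCliquePartition G C) :
    W.ncard ≤ ((⋃ w ∈ W, wedgeEdges w) ∩ {e | Crosses C e}).ncard :=
  Set.ncard_le_ncard_biUnion_inter hdisj (fun w hw => (hW w hw).exists_crosses hC)
    (Set.toFinite _)

theorem ncard_le_cost (hW : ∀ w ∈ W, IsOpenWedge G w)
    (hdisj : W.Pairwise fun w₁ w₂ => Disjoint (wedgeEdges w₁) (wedgeEdges w₂))
    (hC : IsCliquePartition G C) : W.ncard ≤ cost G C := by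
  refine (ncard_le_ncard_wedgeEdges_crosses hW hdisj hC).trans (Set.ncard_le_ncard ?_)
  rintro e ⟨he, hcross⟩
  obtain ⟨w, hw, hew⟩ := Set.mem_iUnion₂.1 he
  exact ⟨(hW w hw).wedgeEdges_subset_edgeSet hew, hcross⟩

theorem ncard_le_OPTCD (hW : ∀ w ∈ W, IsOpenWedge G w)
    (hdisj : W.Pairwise fun w₁ w₂ => Disjoint (wedgeEdges w₁) (wedgeEdges w₂)) :
    W.ncard ≤ OPTCD G :=
  le_csInf ⟨_, ⊥, isCliquePartition_bot G, rfl⟩ fun _ ⟨_, hC, hcost⟩ =>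
    hcost ▸ ncard_le_cost hW hdisj hC

theorem statement_7_general (G : SimpleGraph V) (W : Set (Sym2 V × V))
    (hW : ∀ w ∈ W, IsOpenWedge G w)
    (hdisj : W.Pairwise fun w₁ w₂ => Disjoint (wedgeEdges w₁) (wedgeEdges w₂))
    (EW : Set (Sym2 V)) (hEWdef : EW = ⋃ w ∈ W, wedgeEdges w)
    (C : Finpartition (Finset.univ : Finset V)) (hC : IsCliquePartition G C)
    (mW mS : ℕ)
    (hmW : mW = {e | e ∈ EW ∧ Crosses C e}.ncard)
    (hyp : mS ≤ 2 * (EW.ncard - mW)) :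
    mW + mS ≤ 3 * W.ncard ∧ 3 * W.ncard ≤ 3 * OPTCD G := by
  have hW_le_mW : W.ncard ≤ mW := hmW ▸ hEWdef ▸ ncard_le_ncard_wedgeEdges_crosses hW hdisj hC
  have hmW_le_EW : mW ≤ EW.ncard := hmW ▸ Set.ncard_le_ncard fun e he => he.1
  have hEW_le_W : EW.ncard ≤ W.ncard * 2 :=
    hEWdef ▸ W.toFinite.ncard_biUnion_le_mul fun w _ => wedgeEdges_ncard_le_two w
  have hW_le_OPT := ncard_le_OPTCD hW hdisj
  omega

theorem statement_7 (G : SimpleGraph V) (W : Set (Sym2 V × V))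
    (hW : ∀ w ∈ W, IsOpenWedge G w)
    (hdisj : W.Pairwise fun w₁ w₂ => Disjoint (wedgeEdges w₁) (wedgeEdges w₂))
    (EW : Set (Sym2 V)) (hEWdef : EW = ⋃ w ∈ W, wedgeEdges w)
    (C : Finpartition (Finset.univ : Finset V)) (hC : IsCliquePartition G C)
    (mW mS : ℕ)
    (hmW : mW = {e | e ∈ EW ∧ Crosses C e}.ncard)
    (hmS : mS = {e | e ∈ G.edgeSet \ EW ∧ Crosses C e}.ncard)
    (hyp : mS ≤ 2 * (EW.ncard - mW)) :
    mW + mS ≤ 3 * W.ncard ∧ 3 * W.ncard ≤ 3 * OPTCD G :=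
  statement_7_general G W hW hdisj EW hEWdef C hC mW mS hmW hyp

end CD
end

section
/- For every even integer n ≥ 8, the clique partition of G_n whose parts are {v_1, …, v_{n/2}} and the singletons {u_1}, …, {u_{n/2}} is the unique clique partition of G_n of cost n/2; every other clique partition of G_n has strictly larger cost. -/
open scoped Classical

namespace CD

variable {V : Type*}

variable [Fintype V] [DecidableEq V]

/-- Cyclic successor on `Fin m` (i.e. `i + 1` modulo `m`). -/
def fnext {m : ℕ} (i : Fin m) : Fin m := i + ⟨1 % m, Nat.mod_lt 1 i.pos⟩

/-- Cyclic predecessor on `Fin m` (i.e. `i - 1` modulo `m`). -/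
def fprev {m : ℕ} (i : Fin m) : Fin m := i - ⟨1 % m, Nat.mod_lt 1 i.pos⟩

/-- The graph `G_n` (with `m = n/2`): vertices `Sum.inl i = vᵢ` and `Sum.inr i = uᵢ`;
the `vᵢ` form a clique and each `uᵢ` is pendant, adjacent only to `vᵢ`. -/
def Gn (m : ℕ) : SimpleGraph (Fin m ⊕ Fin m) :=
  SimpleGraph.fromRel (fun a b =>
    match a, b with
    | Sum.inl _, Sum.inl _ => True
    | Sum.inl i, Sum.inr j => i = j
    | _, _ => False)

/-- The parts of the canonical clique partition of `G_n`:
the clique `{v₁, …, v_{n/2}}` together with the singletons `{uⱼ}`. -/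
def Pstar (m : ℕ) : Finset (Finset (Fin m ⊕ Fin m)) :=
  insert ((Finset.univ : Finset (Fin m)).image Sum.inl)
    ((Finset.univ : Finset (Fin m)).image (fun j => {Sum.inr j}))

/-- The wedge set `W_n = { (vᵢ, u_{i+1}, v_{i+1}) : i }`, each wedge centered at `v_{i+1}`,
indices taken modulo `m = n/2`. -/
def Wn (m : ℕ) : Set (Sym2 (Fin m ⊕ Fin m) × (Fin m ⊕ Fin m)) :=
  {w | ∃ i : Fin m, w = (s(Sum.inl i, Sum.inr (fnext i)), Sum.inl (fnext i))}

/-- The pendant edges `{uᵢ, vᵢ}` together with the cycle edges `{vᵢ, v_{i+1}}`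
(indices modulo `m = n/2`). -/
def EWn (m : ℕ) : Set (Sym2 (Fin m ⊕ Fin m)) :=
  {e | ∃ i : Fin m, e = s(Sum.inr i, Sum.inl i)} ∪
  {e | ∃ i : Fin m, e = s(Sum.inl i, Sum.inl (fnext i))}


/-!
A clique of `G_n` is a set of `vᵢ`'s, a singleton `{uᵢ}`, or a pendant pair `{vᵢ, uᵢ}`
(with `m = n / 2`). When `{vᵢ, uᵢ}` is a part, all `m - 1` clique edges at `vᵢ` cross, while every
pendant edge `{vⱼ, uⱼ}` outside a part crosses. So one such part costs at least
`(m - 1) + (m - 1)`, two of them at least the `2m - 3` clique edges at either, both more than `m`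
once `m ≥ 4`. With none, all `m` pendant edges cross and cost `m` forces every `vᵢ` into a single
part, which is the canonical partition.
-/

end CD

namespace Finpartition

variable {α : Type*} [DecidableEq α] {s : Finset α}

lemma parts_eq_image_part (P : Finpartition s) : P.parts = s.image P.part := by
  ext t
  refine ⟨fun ht => ?_, fun ht => ?_⟩
  · obtain ⟨a, ha⟩ := P.nonempty_of_mem_parts ht
    exact Finset.mem_image.2 ⟨a, P.le ht ha, P.part_eq_of_mem ht ha⟩
  · obtain ⟨a, ha, rfl⟩ := Finset.mem_image.1 ht
    exact P.part_mem.2 ha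

lemma parts_eq_of_part_eq {P Q : Finpartition s} (h : ∀ a, P.part a = Q.part a) :
    P.parts = Q.parts := by
  rw [parts_eq_image_part, parts_eq_image_part, funext h]

end Finpartition

namespace CD

open Finset Sum

section CliquePartition

variable {V : Type*} [Fintype V] [DecidableEq V] {G : SimpleGraph V}
  {C : Finpartition (univ : Finset V)}

lemma crosses_mk_iff {x y : V} : Crosses C s(x, y) ↔ y ∉ C.part x := by
  simp [Crosses, Finpartition.mem_part_iff_exists, and_comm]

lemma IsCliquePartition.adj (hC : IsCliquePartition G C) {x y z : V} (hx : x ∈ C.part z)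
    (hy : y ∈ C.part z) (hxy : x ≠ y) : G.Adj x y :=
  hC _ (C.part_mem.2 (mem_univ z)) hx hy hxy

end CliquePartition

variable {m : ℕ}

@[simp] lemma gn_adj_inl_inl {i j : Fin m} : (Gn m).Adj (inl i) (inl j) ↔ i ≠ j := by simp [Gn]

@[simp] lemma gn_adj_inl_inr {i j : Fin m} : (Gn m).Adj (inl i) (inr j) ↔ i = j := by simp [Gn]

@[simp] lemma gn_adj_inr_inl {i j : Fin m} : (Gn m).Adj (inr i) (inl j) ↔ i = j := by
  simp [Gn, eq_comm]

@[simp] lemma gn_not_adj_inr_inr {i j : Fin m} : ¬ (Gn m).Adj (inr i) (inr j) := by simp [Gn]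

noncomputable def canonicalPartition (m : ℕ) : Finpartition (univ : Finset (Fin m ⊕ Fin m)) :=
  Finpartition.ofSetoid (Setoid.ker (Sum.elim (fun _ => none) some))

@[simp] lemma mem_part_canonicalPartition {x y : Fin m ⊕ Fin m} :
    y ∈ (canonicalPartition m).part x ↔
      Sum.elim (fun _ => none) some x = Sum.elim (fun _ => (none : Option (Fin m))) some y :=
  Finpartition.mem_part_ofSetoid_iff_rel

lemma parts_canonicalPartition (hm : 0 < m) : (canonicalPartition m).parts = Pstar m := by
  have hinl (i : Fin m) : (canonicalPartition m).part (inl i) = univ.image inl := by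
    ext (j | j) <;> simp
  have hinr (i : Fin m) : (canonicalPartition m).part (inr i) = {inr i} := by
    ext (j | j) <;> simp [eq_comm]
  ext P
  simp [Finpartition.parts_eq_image_part, Pstar, hinl, hinr, eq_comm, Fin.pos_iff_nonempty.1 hm]

lemma isCliquePartition_canonicalPartition : IsCliquePartition (Gn m) (canonicalPartition m) := by
  intro P hP
  rw [Finpartition.parts_eq_image_part] at hP
  obtain ⟨z, -, rfl⟩ := mem_image.1 hP
  rintro (x | x) hx (y | y) hy hxy <;> cases z <;> simp_all

lemma cost_canonicalPartition : cost (Gn m) (canonicalPartition m) = m := by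
  have : {e | e ∈ (Gn m).edgeSet ∧ Crosses (canonicalPartition m) e} =
      Set.range fun i : Fin m => s(inl i, inr i) := by
    ext e
    induction e using Sym2.ind with
    | _ x y => rcases x with x | x <;> rcases y with y | y <;> simp [crosses_mk_iff, eq_comm]
  rw [cost, this, Set.ncard_range_of_injective, Nat.card_eq_fintype_card, Fintype.card_fin]
  intro i j h
  simpa using h

lemma ncard_incidenceSet_top (i : Fin m) :
    ((⊤ : SimpleGraph (Fin m)).incidenceSet i).ncard = m - 1 := by
  rw [← Nat.card_coe_set_eq, Nat.card_eq_fintype_card, SimpleGraph.card_incidenceSet_eq_degree,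
    SimpleGraph.complete_graph_degree, Fintype.card_fin]

section CostBounds

variable {C : Finpartition (univ : Finset (Fin m ⊕ Fin m))}

lemma ncard_add_ncard_le_cost {U : Set (Fin m)} {B : Set (Sym2 (Fin m))}
    (hU : ∀ i ∈ U, inr i ∉ C.part (inl i)) (hBtop : B ⊆ (⊤ : SimpleGraph (Fin m)).edgeSet)
    (hB : ∀ e ∈ B, Crosses C (e.map inl)) :
    U.ncard + B.ncard ≤ cost (Gn m) C := by
  have hpendant : Function.Injective fun i : Fin m => s((inl i : Fin m ⊕ Fin m), inr i) := by
    intro i j h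
    simpa using h
  rw [cost, ← Set.ncard_image_of_injective U hpendant,
    ← Set.ncard_image_of_injective B (Sym2.map.injective inl_injective), ← Set.ncard_union_eq]
  · refine Set.ncard_le_ncard ?_ (Set.toFinite _)
    rintro _ (⟨i, hi, rfl⟩ | ⟨e, he, rfl⟩)
    · exact ⟨by simp, crosses_mk_iff.2 (hU i hi)⟩
    · refine ⟨?_, hB e he⟩
      induction e using Sym2.ind with
      | _ i j => simpa using hBtop he
  · rw [Set.disjoint_left]
    rintro _ ⟨i, -, rfl⟩ ⟨e, -, he⟩
    induction e using Sym2.ind with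
    | _ j k => simp at he

lemma inl_mem_part_inl_of_cost_le (hpen : ∀ i : Fin m, inr i ∉ C.part (inl i))
    (hcost : cost (Gn m) C ≤ m) (i j : Fin m) : inl j ∈ C.part (inl i) := by
  by_contra hj
  have hij : i ≠ j := by
    rintro rfl
    exact hj (C.mem_part (mem_univ _))
  have := ncard_add_ncard_le_cost (U := Set.univ) (B := {s(i, j)}) (fun i _ => hpen i)
    (by simpa using hij) (by simpa [crosses_mk_iff] using hj)
  rw [Set.ncard_univ, Nat.card_eq_fintype_card, Fintype.card_fin, Set.ncard_singleton] at this
  omega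

variable (hC : IsCliquePartition (Gn m) C)
include hC

lemma inl_notMem_part_inl {i j : Fin m} (hi : inr i ∈ C.part (inl i)) (hij : i ≠ j) :
    inl j ∉ C.part (inl i) := fun hj =>
  hij (by simpa [eq_comm] using hC.adj hj hi inl_ne_inr)

lemma crosses_of_mem_incidenceSet {i : Fin m} (hi : inr i ∈ C.part (inl i)) {e : Sym2 (Fin m)}
    (he : e ∈ (⊤ : SimpleGraph (Fin m)).incidenceSet i) : Crosses C (e.map inl) := by
  obtain ⟨j, rfl⟩ := Sym2.mem_iff_exists.1 he.2
  rw [Sym2.map_mk, crosses_mk_iff]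
  exact inl_notMem_part_inl hC hi (by simpa using he.1)

lemma lt_cost_of_two_pendant_parts (hm : 4 ≤ m) {i j : Fin m} (hij : i ≠ j)
    (hi : inr i ∈ C.part (inl i)) (hj : inr j ∈ C.part (inl j)) : m < cost (Gn m) C := by
  set T := (⊤ : SimpleGraph (Fin m))
  have hstars := ncard_add_ncard_le_cost (U := ∅) (B := T.incidenceSet i ∪ T.incidenceSet j)
    (by simp) (Set.union_subset (T.incidenceSet_subset i) (T.incidenceSet_subset j))
    (fun e he => he.elim (crosses_of_mem_incidenceSet hC hi) (crosses_of_mem_incidenceSet hC hj))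
  have hunion := Set.ncard_union_add_ncard_inter (T.incidenceSet i) (T.incidenceSet j)
  rw [T.incidenceSet_inter_incidenceSet_of_adj (by simpa [T] using hij), Set.ncard_singleton,
    ncard_incidenceSet_top, ncard_incidenceSet_top] at hunion
  simp only [Set.ncard_empty] at hstars
  omega

lemma lt_cost_of_pendant_part (hm : 4 ≤ m) {i : Fin m} (hi : inr i ∈ C.part (inl i)) :
    m < cost (Gn m) C := by
  by_cases hother : ∃ j ≠ i, inr j ∈ C.part (inl j)
  · obtain ⟨j, hji, hj⟩ := hother
    exact lt_cost_of_two_pendant_parts hC hm hji.symm hi hj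
  · push Not at hother
    have hstar := ncard_add_ncard_le_cost (U := {i}ᶜ)
      (B := (⊤ : SimpleGraph (Fin m)).incidenceSet i) hother
      (SimpleGraph.incidenceSet_subset _ i) (fun _ => crosses_of_mem_incidenceSet hC hi)
    rw [Set.ncard_compl, Set.ncard_singleton, Nat.card_eq_fintype_card, Fintype.card_fin,
      ncard_incidenceSet_top] at hstar
    omega

lemma part_eq_canonicalPartition_part (hpen : ∀ i : Fin m, inr i ∉ C.part (inl i))
    (hcl : ∀ i j : Fin m, inl j ∈ C.part (inl i)) (x : Fin m ⊕ Fin m) :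
    C.part x = (canonicalPartition m).part x := by
  ext y
  rcases x with i | i <;> rcases y with j | j <;> simp only [mem_part_canonicalPartition,
    Sum.elim_inl, Sum.elim_inr, reduceCtorEq, Option.some.injEq, iff_true, iff_false]
  · exact hcl i j
  · intro hj
    obtain rfl : i = j := by simpa using hC.adj (C.mem_part (mem_univ _)) hj inl_ne_inr
    exact hpen i hj
  · intro hj
    obtain rfl : j = i := by simpa using hC.adj hj (C.mem_part (mem_univ _)) inl_ne_inr
    apply hpen j
    rw [C.part_eq_of_mem (C.part_mem.2 (mem_univ (inr j))) hj]
    exact C.mem_part (mem_univ _)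
  · refine ⟨fun hj => ?_, fun h => h ▸ C.mem_part (mem_univ _)⟩
    by_contra hij
    exact gn_not_adj_inr_inr (hC.adj (C.mem_part (mem_univ _)) hj (by simpa using hij))

end CostBounds

theorem statement_9_general (n : ℕ) (h8 : 8 ≤ n) :
    (∃ C : Finpartition (Finset.univ : Finset (Fin (n / 2) ⊕ Fin (n / 2))),
      C.parts = Pstar (n / 2) ∧ IsCliquePartition (Gn (n / 2)) C ∧
      cost (Gn (n / 2)) C = n / 2) ∧
    ∀ C : Finpartition (Finset.univ : Finset (Fin (n / 2) ⊕ Fin (n / 2))),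
      IsCliquePartition (Gn (n / 2)) C → C.parts ≠ Pstar (n / 2) →
      n / 2 < cost (Gn (n / 2)) C := by
  have hm : 4 ≤ n / 2 := by omega
  refine ⟨⟨canonicalPartition _, parts_canonicalPartition (by omega),
    isCliquePartition_canonicalPartition, cost_canonicalPartition⟩, fun C hC hne => ?_⟩
  by_contra! hcost
  by_cases hpendant : ∃ i, inr i ∈ C.part (inl i)
  · obtain ⟨i, hi⟩ := hpendant
    exact hcost.not_gt (lt_cost_of_pendant_part hC hm hi)
  · push Not at hpendant
    apply hne
    rw [← parts_canonicalPartition (by omega)]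
    exact Finpartition.parts_eq_of_part_eq <| part_eq_canonicalPartition_part hC hpendant
      (inl_mem_part_inl_of_cost_le hpendant hcost)

theorem statement_9 (n : ℕ) (hn : Even n) (h8 : 8 ≤ n) :
    (∃ C : Finpartition (Finset.univ : Finset (Fin (n / 2) ⊕ Fin (n / 2))),
      C.parts = Pstar (n / 2) ∧ IsCliquePartition (Gn (n / 2)) C ∧
      cost (Gn (n / 2)) C = n / 2) ∧
    ∀ C : Finpartition (Finset.univ : Finset (Fin (n / 2) ⊕ Fin (n / 2))),
      IsCliquePartition (Gn (n / 2)) C → C.parts ≠ Pstar (n / 2) →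
      n / 2 < cost (Gn (n / 2)) C :=
  statement_9_general n h8

end CD
end

section
/- For every even integer n ≥ 8, the set W_n = { (v_i, u_{i+1}, v_{i+1}) : i = 1, …, n/2 } (indices taken modulo n/2, each wedge centered at v_{i+1}) is a maximal edge-disjoint set of open wedges of G_n, and the set of edges contained in wedges of W_n equals the union of the pendant edges {u_i, v_i} (i = 1, …, n/2) and the cycle edges {v_i, v_{i+1}} (i = 1, …, n/2, indices modulo n/2). -/
open scoped Classical

namespace CD

variable {V : Type*}

variable [Fintype V] [DecidableEq V]

section Aux
variable {m : ℕ}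

lemma fnext_val (hm : 2 ≤ m) (i : Fin m) : (fnext i).val = (i.val + 1) % m := by
  simp [fnext, Fin.add_def, Nat.mod_eq_of_lt (show 1 < m by omega)]

lemma fnext_ne (hm : 2 ≤ m) (i : Fin m) : fnext i ≠ i := by
  intro h
  have := congrArg Fin.val h
  rw [fnext_val hm] at this
  have hi := i.isLt
  rcases Nat.lt_or_ge (i.val + 1) m with h' | h'
  · rw [Nat.mod_eq_of_lt h'] at this; omega
  · have : (i.val + 1) % m = 0 := by
      have : i.val + 1 = m := by omega
      simp [this]
    omega

lemma succ_mod_cases (hm : 0 < m) (a : ℕ) (ha : a < m) :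
    (a + 1) % m = a + 1 ∨ (a + 1 = m ∧ (a + 1) % m = 0) := by
  rcases Nat.lt_or_ge (a + 1) m with h | h
  · exact Or.inl (Nat.mod_eq_of_lt h)
  · have he : a + 1 = m := by omega
    exact Or.inr ⟨he, by simp [he]⟩

lemma fnext_inj (hm : 2 ≤ m) {i j : Fin m} (h : fnext i = fnext j) : i = j := by
  have hv := congrArg Fin.val h
  rw [fnext_val hm, fnext_val hm] at hv
  have hi := i.isLt; have hj := j.isLt
  have e1 := succ_mod_cases (by omega) i.val hi
  have e2 := succ_mod_cases (by omega) j.val hj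
  apply Fin.ext
  omega

lemma fnext_fnext_ne (hm : 3 ≤ m) (i : Fin m) : fnext (fnext i) ≠ i := by
  intro h
  have := congrArg Fin.val h
  rw [fnext_val (by omega), fnext_val (by omega)] at this
  have hi := i.isLt
  rcases Nat.lt_or_ge (i.val + 1) m with h1 | h1
  · rw [Nat.mod_eq_of_lt h1] at this
    rcases Nat.lt_or_ge (i.val + 2) m with h2 | h2
    · rw [Nat.mod_eq_of_lt h2] at this; omega
    · have he : i.val + 2 = m := by omega
      have : (i.val + 1 + 1) % m = 0 := by rw [show i.val+1+1 = m by omega]; simp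
      omega
  · have he : i.val + 1 = m := by omega
    have h0 : (i.val + 1) % m = 0 := by rw [he]; simp
    rw [h0] at this
    rw [Nat.mod_eq_of_lt (by omega)] at this
    omega

lemma fnext_fprev (i : Fin m) : fnext (fprev i) = i := by
  haveI : NeZero m := ⟨i.pos.ne'⟩
  exact sub_add_cancel i _

lemma gn_adj_ll {i j : Fin m} : (Gn m).Adj (Sum.inl i) (Sum.inl j) ↔ i ≠ j := by
  simp [Gn]

lemma gn_adj_lr {i j : Fin m} : (Gn m).Adj (Sum.inl i) (Sum.inr j) ↔ i = j := by
  constructor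
  · intro h
    rw [Gn, SimpleGraph.fromRel_adj] at h
    rcases h with ⟨-, h | h⟩
    · exact h
    · exact absurd h (by simp)
  · rintro rfl
    rw [Gn, SimpleGraph.fromRel_adj]
    exact ⟨by simp, Or.inl rfl⟩

lemma gn_not_adj_rr {i j : Fin m} : ¬ (Gn m).Adj (Sum.inr i) (Sum.inr j) := by
  rw [Gn, SimpleGraph.fromRel_adj]
  rintro ⟨-, h | h⟩ <;> exact h

lemma wedgeEdges_pair {V : Type*} (a b c : V) :
    wedgeEdges (s(a, b), c) = {s(a, c), s(b, c)} := by
  ext e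
  simp only [wedgeEdges, Set.mem_setOf_eq, Sym2.mem_iff, Set.mem_insert_iff,
    Set.mem_singleton_iff]
  constructor
  · rintro ⟨x, (rfl | rfl), rfl⟩
    · exact Or.inl rfl
    · exact Or.inr rfl
  · rintro (rfl | rfl)
    · exact ⟨a, Or.inl rfl, rfl⟩
    · exact ⟨b, Or.inr rfl, rfl⟩

end Aux

theorem statement_10 (n : ℕ) (hn : Even n) (h8 : 8 ≤ n) :
    (∀ w ∈ Wn (n / 2), IsOpenWedge (Gn (n / 2)) w) ∧
    (Wn (n / 2)).Pairwise (fun w₁ w₂ => Disjoint (wedgeEdges w₁) (wedgeEdges w₂)) ∧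
    (∀ w, IsOpenWedge (Gn (n / 2)) w →
      ∃ w' ∈ Wn (n / 2), ¬ Disjoint (wedgeEdges w) (wedgeEdges w')) ∧
    (⋃ w ∈ Wn (n / 2), wedgeEdges w) = EWn (n / 2) := by
  set m := n / 2 with hmdef
  have hm : 4 ≤ m := by omega
  have h2 : 2 ≤ m := by omega
  refine ⟨?_, ?_, ?_, ?_⟩
  · rintro w ⟨i, rfl⟩
    refine ⟨Sum.inl i, Sum.inr (fnext i), rfl, by simp, ?_, ?_, ?_⟩
    · exact gn_adj_ll.mpr (fun h => fnext_ne h2 i h.symm)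
    · exact (gn_adj_lr.mpr rfl).symm
    · rw [gn_adj_lr]
      exact fun h => fnext_ne h2 i h.symm
  · rintro w₁ ⟨i, rfl⟩ w₂ ⟨j, rfl⟩ hne
    have hij : i ≠ j := by rintro rfl; exact hne rfl
    rw [wedgeEdges_pair, wedgeEdges_pair]
    rw [Set.disjoint_iff_inter_eq_empty]
    ext e
    simp only [Set.mem_inter_iff, Set.mem_insert_iff, Set.mem_singleton_iff,
      Set.mem_empty_iff_false, iff_false, not_and]
    rintro (rfl | rfl) (h | h)
    · rw [Sym2.eq_iff] at h
      rcases h with ⟨h1, h2'⟩ | ⟨h1, h2'⟩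
      · exact hij (by simpa using h1)
      · have e1 : i = fnext j := by simpa using h1
        have e2 : fnext i = j := by simpa using h2'
        exact fnext_fnext_ne (by omega) j (by rw [← e1, e2])
    · rw [Sym2.eq_iff] at h
      rcases h with ⟨h1, -⟩ | ⟨-, h2'⟩ <;> simp_all
    · rw [Sym2.eq_iff] at h
      rcases h with ⟨h1, -⟩ | ⟨h1, -⟩ <;> simp_all
    · rw [Sym2.eq_iff] at h
      rcases h with ⟨h1, -⟩ | ⟨h1, h2'⟩
      · exact hij (fnext_inj h2 (by simpa using h1))
      · simp_all
  · rintro ⟨p, k⟩ ⟨i, j, hp, hij, hik, hjk, hnadj⟩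
    simp only at hp hik hjk
    -- show the center is some `inl c` with `inr c` an endpoint
    have key : ∃ c : Fin m, k = Sum.inl c ∧ Sum.inr c ∈ p := by
      cases k with
      | inr c =>
        have : i = Sum.inl c := by
          cases i with
          | inl a => rw [gn_adj_lr] at hik; rw [hik]
          | inr a => exact absurd hik gn_not_adj_rr
        have hj' : j = Sum.inl c := by
          cases j with
          | inl a => rw [gn_adj_lr] at hjk; rw [hjk]
          | inr a => exact absurd hjk gn_not_adj_rr
        exact absurd (this.trans hj'.symm) hij
      | inl c =>
        cases i with
        | inr a =>
          have ha : a = c := by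
            have := hik.symm; rw [gn_adj_lr] at this; exact this.symm
          exact ⟨c, rfl, by rw [hp, ← ha]; simp⟩
        | inl a =>
          cases j with
          | inr b =>
            have hb : b = c := by
              have := hjk.symm; rw [gn_adj_lr] at this; exact this.symm
            exact ⟨c, rfl, by rw [hp, ← hb]; simp⟩
          | inl b =>
            have hab : a ≠ b := fun h => hij (by rw [h])
            exact absurd (gn_adj_ll.mpr hab) hnadj
    obtain ⟨c, rfl, hc⟩ := key
    refine ⟨(s(Sum.inl (fprev c), Sum.inr (fnext (fprev c))), Sum.inl (fnext (fprev c))),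
      ⟨fprev c, rfl⟩, ?_⟩
    rw [Set.not_disjoint_iff]
    refine ⟨s(Sum.inr c, Sum.inl c), ⟨Sum.inr c, hc, rfl⟩, ?_⟩
    rw [fnext_fprev]
    exact ⟨Sum.inr c, by simp, rfl⟩
  · ext e
    simp only [Set.mem_iUnion, EWn, Set.mem_union, Set.mem_setOf_eq, Wn]
    constructor
    · rintro ⟨w, ⟨i, rfl⟩, he⟩
      rw [wedgeEdges_pair] at he
      rcases he with rfl | rfl
      · exact Or.inr ⟨i, rfl⟩
      · exact Or.inl ⟨fnext i, rfl⟩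
    · rintro (⟨i, rfl⟩ | ⟨i, rfl⟩)
      · refine ⟨(s(Sum.inl (fprev i), Sum.inr (fnext (fprev i))), Sum.inl (fnext (fprev i))),
          ⟨fprev i, rfl⟩, ?_⟩
        rw [wedgeEdges_pair, fnext_fprev]
        simp
      · exact ⟨(s(Sum.inl i, Sum.inr (fnext i)), Sum.inl (fnext i)), ⟨i, rfl⟩,
          by rw [wedgeEdges_pair]; simp⟩

end CD
end
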